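/- In the algebra generated by fermionic variables as above, the operators I¹¹ = −i ψ_a^j ψ^{aj}, I²² = i ψ̄^{aj} ψ̄_a^j, I¹² = −(i/2)[ψ_a^j, ψ̄^{aj}] (summation over a,j) satisfy [I¹¹, I²²] = 2i I¹², [I¹¹, I¹²] = i I¹¹, and [I²², I¹²] = −i I²², i.e. they form an sl(2) triple with relations [I^{ab}, I^{cd}] = −i(ε^{ac}I^{bd} + ε^{bd}I^{ac}). -/

import Mathlib

/-!
The anticommutation relations give `I¹¹ = -2i P`, `I²² = 2i Q` and `I¹² = -i H` for
`P = ∑ ψ^{2j} ψ^{1j}`, `Q = ∑ ψ̄_1^j ψ̄_2^j` and `H = ∑ (ψ̄_1^j ψ^{1j} - ψ^{2j} ψ̄_2^j)`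
(the indices `a = 1, 2` are `0, 1 : Fin 2` in the code). Since `⁅x y, z⁆ = x {y, z} - {x, z} y`
and the anticommutators of the generators are scalars, bracketing with `P` or `Q` sends each
generator to a multiple of a generator; as `⁅X, ·⁆` is a derivation, this yields
`⁅P, Q⁆ = H / 2`, `⁅P, H⁆ = -P` and `⁅Q, H⁆ = Q`.
-/

open Finset

noncomputable def epsLo : Fin 2 → Fin 2 → ℂ := fun a b =>
  if a = 0 ∧ b = 1 then 1 else if a = 1 ∧ b = 0 then -1 else 0

noncomputable def epsHi : Fin 2 → Fin 2 → ℂ := fun a b => epsLo b a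

/-- Lowered fermion `ψ_a^j = ε_{ab} ψ^{bj}`. -/
noncomputable def psiLo {N : ℕ} {A : Type*} [Ring A] [Algebra ℂ A]
    (ψ : Fin 2 → Fin N → A) (a : Fin 2) (j : Fin N) : A :=
  ∑ b, epsLo a b • ψ b j

/-- Raised fermion `ψ̄^{aj} = ε^{ab} ψ̄_b^j`. -/
noncomputable def psibUp {N : ℕ} {A : Type*} [Ring A] [Algebra ℂ A]
    (ψb : Fin 2 → Fin N → A) (a : Fin 2) (j : Fin N) : A :=
  ∑ b, epsHi a b • ψb b j

/-- `I¹¹ = −i ψ_a^j ψ^{aj}`. -/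
noncomputable def I11 {N : ℕ} {A : Type*} [Ring A] [Algebra ℂ A]
    (ψ : Fin 2 → Fin N → A) : A :=
  (-Complex.I) • (∑ j, ∑ a, psiLo ψ a j * ψ a j)

/-- `I²² = i ψ̄^{aj} ψ̄_a^j`. -/
noncomputable def I22 {N : ℕ} {A : Type*} [Ring A] [Algebra ℂ A]
    (ψb : Fin 2 → Fin N → A) : A :=
  Complex.I • (∑ j, ∑ a, psibUp ψb a j * ψb a j)

/-- `I¹² = −(i/2)[ψ_a^j, ψ̄^{aj}]`. -/
noncomputable def I12 {N : ℕ} {A : Type*} [Ring A] [Algebra ℂ A]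
    (ψ ψb : Fin 2 → Fin N → A) : A :=
  (-(Complex.I) / 2) •
    (∑ j, ∑ a, (psiLo ψ a j * psibUp ψb a j - psibUp ψb a j * psiLo ψ a j))

attribute [local instance] LieRing.ofAssociativeRing

section Commutator

variable {R A : Type*} [CommRing R] [Ring A] [Algebra R A]

theorem lie_mul_left_eq_mul_anticomm_sub (x y z : A) :
    ⁅x * y, z⁆ = x * (y * z + z * y) - (x * z + z * x) * y := by
  simp only [Ring.lie_def]
  noncomm_ring

theorem lie_mul_right (x y z : A) : ⁅x, y * z⁆ = ⁅x, y⁆ * z + y * ⁅x, z⁆ := by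
  simp only [Ring.lie_def]
  noncomm_ring

theorem sum_mul_lie_of_anticomm_eq_smul_one {ι : Type*} (s : Finset ι) (u v : ι → A) (x : A)
    (c d : ι → R) (hu : ∀ j ∈ s, u j * x + x * u j = d j • 1)
    (hv : ∀ j ∈ s, v j * x + x * v j = c j • 1) :
    ⁅∑ j ∈ s, u j * v j, x⁆ = ∑ j ∈ s, (c j • u j - d j • v j) := by
  rw [sum_lie]
  refine sum_congr rfl fun j hj => ?_
  rw [lie_mul_left_eq_mul_anticomm_sub, hu j hj, hv j hj, mul_smul_comm, smul_mul_assoc,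
    mul_one, one_mul]

end Commutator

section Fermions

variable {ι A : Type*} [Ring A] [Algebra ℂ A]

def CanonicalAnticomm [DecidableEq ι] (ψ ψb : Fin 2 → ι → A) : Prop :=
  ∀ (a b : Fin 2) (j k : ι), ψ a j * ψb b k + ψb b k * ψ a j =
    (if j = k ∧ a = b then (-(1 : ℂ) / 2) else 0) • (1 : A)

def PairwiseAnticomm (ψ : Fin 2 → ι → A) : Prop :=
  ∀ (a b : Fin 2) (j k : ι), ψ a j * ψ b k + ψ b k * ψ a j = 0

def quadPsi [Fintype ι] (ψ : Fin 2 → ι → A) : A := ∑ j, ψ 1 j * ψ 0 j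

def quadPsib [Fintype ι] (ψb : Fin 2 → ι → A) : A := ∑ j, ψb 0 j * ψb 1 j

def quadMixed [Fintype ι] (ψ ψb : Fin 2 → ι → A) : A := ∑ j, (ψb 0 j * ψ 0 j - ψ 1 j * ψb 1 j)

variable {ψ ψb : Fin 2 → ι → A}

theorem CanonicalAnticomm.anticomm_self [DecidableEq ι] (h : CanonicalAnticomm ψ ψb) (a : Fin 2)
    (j : ι) : ψ a j * ψb a j + ψb a j * ψ a j = (-(1 : ℂ) / 2) • (1 : A) := by
  simpa using h a a j j

theorem PairwiseAnticomm.sum_mul_lie [Fintype ι] (h : PairwiseAnticomm ψ) (a b c : Fin 2)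
    (k : ι) : ⁅∑ j, ψ a j * ψ b j, ψ c k⁆ = 0 := by
  rw [sum_mul_lie_of_anticomm_eq_smul_one (R := ℂ) _ _ _ _ 0 0
    (fun j _ => by rw [h a c j k, Pi.zero_apply, zero_smul])
    (fun j _ => by rw [h b c j k, Pi.zero_apply, zero_smul])]
  simp

theorem CanonicalAnticomm.sum_mul_lie_psib [Fintype ι] [DecidableEq ι]
    (h : CanonicalAnticomm ψ ψb) (a b c : Fin 2) (k : ι) :
    ⁅∑ j, ψ a j * ψ b j, ψb c k⁆ =
      (if b = c then (-(1 : ℂ) / 2) else 0) • ψ a k -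
        (if a = c then (-(1 : ℂ) / 2) else 0) • ψ b k := by
  rw [sum_mul_lie_of_anticomm_eq_smul_one _ _ _ _ _ _ (fun j _ => h a c j k)
    (fun j _ => h b c j k)]
  simp [ite_and, sum_sub_distrib]

theorem CanonicalAnticomm.sum_mul_lie_psi [Fintype ι] [DecidableEq ι]
    (h : CanonicalAnticomm ψ ψb) (a b c : Fin 2) (k : ι) :
    ⁅∑ j, ψb a j * ψb b j, ψ c k⁆ =
      (if b = c then (-(1 : ℂ) / 2) else 0) • ψb a k -
        (if a = c then (-(1 : ℂ) / 2) else 0) • ψb b k := by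
  rw [sum_mul_lie_of_anticomm_eq_smul_one _ _ _ _ _ _
    (fun j _ => (add_comm _ _).trans (h c a k j)) (fun j _ => (add_comm _ _).trans (h c b k j))]
  simp [ite_and, sum_sub_distrib, eq_comm]

theorem CanonicalAnticomm.quadPsi_lie_quadPsib [Fintype ι] [DecidableEq ι]
    (h : CanonicalAnticomm ψ ψb) : ⁅quadPsi ψ, quadPsib ψb⁆ = (1 / 2 : ℂ) • quadMixed ψ ψb := by
  rw [quadPsib, quadMixed, lie_sum, smul_sum]
  refine sum_congr rfl fun k _ => ?_
  rw [lie_mul_right, quadPsi, h.sum_mul_lie_psib, h.sum_mul_lie_psib]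
  simp only [Fin.isValue, zero_ne_one, one_ne_zero, ↓reduceIte, sub_mul, mul_sub,
    smul_mul_assoc, mul_smul_comm]
  module

theorem CanonicalAnticomm.quadPsi_lie_quadMixed [Fintype ι] [DecidableEq ι]
    (h : CanonicalAnticomm ψ ψb) (hψ : PairwiseAnticomm ψ) :
    ⁅quadPsi ψ, quadMixed ψ ψb⁆ = -quadPsi ψ := by
  rw [quadMixed, lie_sum, quadPsi, ← sum_neg_distrib]
  refine sum_congr rfl fun k _ => ?_
  rw [lie_sub, lie_mul_right, lie_mul_right, h.sum_mul_lie_psib, h.sum_mul_lie_psib,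
    hψ.sum_mul_lie, hψ.sum_mul_lie, mul_zero, zero_mul]
  simp only [Fin.isValue, zero_ne_one, one_ne_zero, ↓reduceIte, sub_mul, mul_sub,
    smul_mul_assoc, mul_smul_comm]
  module

theorem CanonicalAnticomm.quadPsib_lie_quadMixed [Fintype ι] [DecidableEq ι]
    (h : CanonicalAnticomm ψ ψb) (hψb : PairwiseAnticomm ψb) :
    ⁅quadPsib ψb, quadMixed ψ ψb⁆ = quadPsib ψb := by
  rw [quadMixed, lie_sum, quadPsib]
  refine sum_congr rfl fun k _ => ?_
  rw [lie_sub, lie_mul_right, lie_mul_right, h.sum_mul_lie_psi, h.sum_mul_lie_psi,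
    hψb.sum_mul_lie, hψb.sum_mul_lie, mul_zero, zero_mul]
  simp only [Fin.isValue, zero_ne_one, one_ne_zero, ↓reduceIte, sub_mul, mul_sub,
    smul_mul_assoc, mul_smul_comm]
  module

end Fermions

section Normalization

variable {N : ℕ} {A : Type*} [Ring A] [Algebra ℂ A] {ψ ψb : Fin 2 → Fin N → A}

theorem psiLo_zero (j : Fin N) : psiLo ψ 0 j = ψ 1 j := by
  simp [psiLo, epsLo]

theorem psiLo_one (j : Fin N) : psiLo ψ 1 j = -ψ 0 j := by
  simp [psiLo, epsLo]

theorem psibUp_zero (j : Fin N) : psibUp ψb 0 j = -ψb 1 j := by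
  simp [psibUp, epsHi, epsLo]

theorem psibUp_one (j : Fin N) : psibUp ψb 1 j = ψb 0 j := by
  simp [psibUp, epsHi, epsLo]

theorem I11_eq (h : PairwiseAnticomm ψ) : I11 ψ = (-2 * Complex.I) • quadPsi ψ := by
  have hsum (j : Fin N) : ∑ a, psiLo ψ a j * ψ a j = (2 : ℂ) • (ψ 1 j * ψ 0 j) := by
    rw [Fin.sum_univ_two, psiLo_zero, psiLo_one, neg_mul, eq_neg_of_add_eq_zero_left (h 0 1 j j),
      neg_neg, two_smul]
  simp only [I11, hsum, quadPsi, ← smul_sum, smul_smul]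
  ring_nf

theorem I22_eq (h : PairwiseAnticomm ψb) : I22 ψb = (2 * Complex.I) • quadPsib ψb := by
  have hsum (j : Fin N) : ∑ a, psibUp ψb a j * ψb a j = (2 : ℂ) • (ψb 0 j * ψb 1 j) := by
    rw [Fin.sum_univ_two, psibUp_zero, psibUp_one, neg_mul,
      eq_neg_of_add_eq_zero_left (h 1 0 j j), neg_neg, two_smul]
  simp only [I22, hsum, quadPsib, ← smul_sum, smul_smul]
  ring_nf

theorem I12_eq (h : CanonicalAnticomm ψ ψb) : I12 ψ ψb = (-Complex.I) • quadMixed ψ ψb := by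
  have hsum (j : Fin N) : ∑ a, (psiLo ψ a j * psibUp ψb a j - psibUp ψb a j * psiLo ψ a j) =
      (2 : ℂ) • (ψb 0 j * ψ 0 j - ψ 1 j * ψb 1 j) := by
    rw [Fin.sum_univ_two, psiLo_zero, psiLo_one, psibUp_zero, psibUp_one, mul_neg, neg_mul,
      neg_mul, mul_neg, eq_sub_of_add_eq' (h.anticomm_self 1 j),
      eq_sub_of_add_eq (h.anticomm_self 0 j)]
    module
  simp only [I12, hsum, quadMixed, ← smul_sum, smul_smul]
  ring_nf

end Normalization

/-- The operators `I¹¹, I²², I¹²` satisfy `[I¹¹,I²²] = 2i I¹²`, `[I¹¹,I¹²] = i I¹¹`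
and `[I²²,I¹²] = −i I²²`, i.e. they form an `sl(2)` triple. -/
theorem stmt17 {N : ℕ} {A : Type*} [Ring A] [Algebra ℂ A]
    (ψ ψb : Fin 2 → Fin N → A)
    (h1 : ∀ (a b : Fin 2) (j k : Fin N),
      ψ a j * ψb b k + ψb b k * ψ a j =
        (if j = k ∧ a = b then (-(1 : ℂ) / 2) else 0) • (1 : A))
    (h2 : ∀ (a b : Fin 2) (j k : Fin N), ψ a j * ψ b k + ψ b k * ψ a j = 0)
    (h3 : ∀ (a b : Fin 2) (j k : Fin N), ψb a j * ψb b k + ψb b k * ψb a j = 0) :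
    I11 ψ * I22 ψb - I22 ψb * I11 ψ = (2 * Complex.I) • I12 ψ ψb ∧
    I11 ψ * I12 ψ ψb - I12 ψ ψb * I11 ψ = Complex.I • I11 ψ ∧
    I22 ψb * I12 ψ ψb - I12 ψ ψb * I22 ψb = (-Complex.I) • I22 ψb := by
  have hcar : CanonicalAnticomm ψ ψb := h1
  refine ⟨?_, ?_, ?_⟩ <;>
    simp only [← Ring.lie_def, I11_eq h2, I22_eq h3, I12_eq hcar, smul_lie, lie_smul,
      hcar.quadPsi_lie_quadPsib, hcar.quadPsi_lie_quadMixed h2, hcar.quadPsib_lie_quadMixed h3] <;>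
    module
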